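/- arXiv:2108.00650 — 12 statements merged into one kernel-verified Lean document; each statement's English description precedes it below -/
import Mathlib

section
/- For all t, α ∈ k with α^{q−2} = 1, one has the vector identity v(t + α) = v(t) + α·v'(t) in k^5; in particular v(t + α) lies in the tangent span T(t). -/
/-- The affine parametrization of the curve
`φ(1:t) = (1 : t : t² − t^q : t^{qⁿ} − t^{q^{2n}} : t(t^{qⁿ} − t^{q^{2n}}))`. -/
def curveVec {k : Type*} [Field k] (q n : ℕ) (t : k) : Fin 5 → k :=
  ![1, t, t ^ 2 - t ^ q, t ^ q ^ n - t ^ q ^ (2 * n),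
    t * (t ^ q ^ n - t ^ q ^ (2 * n))]

/-- The coordinatewise derivative of `curveVec`. -/
def curveVec' {k : Type*} [Field k] (q n : ℕ) (t : k) : Fin 5 → k :=
  ![0, 1, 2 * t, 0, t ^ q ^ n - t ^ q ^ (2 * n)]

/-- The affine cone of the tangent line at the point of parameter `t`. -/
def tangentSpan (k : Type*) [Field k] (q n : ℕ) (t : k) : Submodule k (Fin 5 → k) :=
  Submodule.span k {curveVec q n t, curveVec' q n t}

theorem stmt0 (k : Type*) [Field k] [IsAlgClosed k] (p q n : ℕ) (hp : p.Prime)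
    [CharP k p] (hp2 : 2 < p) (hq : ∃ m : ℕ, 0 < m ∧ q = p ^ m) (hn : 1 ≤ n)
    (hdvd : (q - 2) ∣ (q ^ n - 1)) (t α : k) (hα : α ^ (q - 2) = 1) :
    curveVec q n (t + α) = curveVec q n t + α • curveVec' q n t ∧
      curveVec q n (t + α) ∈ tangentSpan k q n t := by
  haveI : Fact p.Prime := ⟨hp⟩
  obtain ⟨m, hm, rfl⟩ := hq
  have hq3 : 3 ≤ p ^ m := le_trans hp2 (Nat.le_self_pow hm.ne' p)
  -- Frobenius additivity
  have frob : ∀ (x y : k) (r : ℕ), (x + y) ^ (p ^ m) ^ r = x ^ (p ^ m) ^ r + y ^ (p ^ m) ^ r := by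
    intro x y r
    rw [← pow_mul p m r]; exact add_pow_char_pow x y p (m * r)
  have frob1 : ∀ x y : k, (x + y) ^ (p ^ m) = x ^ (p ^ m) + y ^ (p ^ m) := by
    intro x y; exact add_pow_char_pow x y p m
  -- α ^ q = α ^ 2
  have hαq : α ^ (p ^ m) = α ^ 2 := by
    have h : p ^ m = 2 + (p ^ m - 2) := by omega
    rw [h, pow_add, hα, mul_one]
  -- α ^ (q ^ n) = α
  have hαn : α ^ (p ^ m) ^ n = α := by
    obtain ⟨s, hs⟩ := hdvd
    have h : (p ^ m) ^ n = 1 + (p ^ m - 2) * s := by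
      have h1 : 1 ≤ (p ^ m) ^ n := Nat.one_le_pow _ _ (by omega)
      omega
    rw [h, pow_add, pow_mul, hα, one_pow, mul_one, pow_one]
  -- α ^ (q ^ (2n)) = α
  have hα2n : α ^ (p ^ m) ^ (2 * n) = α := by
    have h : (p ^ m) ^ (2 * n) = (p ^ m) ^ n * (p ^ m) ^ n := by
      rw [← pow_add]; ring_nf
    rw [h, pow_mul, hαn, hαn]
  have key : curveVec (p ^ m) n (t + α) = curveVec (p ^ m) n t + α • curveVec' (p ^ m) n t := by
    funext i
    fin_cases i <;> simp [curveVec, curveVec']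
    · rw [frob1 t α, hαq]; ring
    · rw [frob t α n, frob t α (2 * n), hαn, hα2n]; ring
    · rw [frob t α n, frob t α (2 * n), hαn, hα2n]; ring
  refine ⟨key, ?_⟩
  rw [key]
  exact Submodule.add_mem _
    (Submodule.subset_span (Set.mem_insert _ _))
    (Submodule.smul_mem _ _ (Submodule.subset_span (Set.mem_insert_of_mem _ rfl)))
end

section
/- For all t, β ∈ k, the vector v(t + β) lies in the tangent span T(t) if and only if β^q = β^2. -/
theorem stmt1 (k : Type*) [Field k] [IsAlgClosed k] (p q n : ℕ) (hp : p.Prime)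
    [CharP k p] (hp2 : 2 < p) (hq : ∃ m : ℕ, 0 < m ∧ q = p ^ m) (hn : 1 ≤ n)
    (hdvd : (q - 2) ∣ (q ^ n - 1)) (t β : k) :
    curveVec q n (t + β) ∈ tangentSpan k q n t ↔ β ^ q = β ^ 2 := by
  obtain ⟨m, hm, rfl⟩ := hq
  haveI := Fact.mk hp
  have hq3 : 3 ≤ p ^ m := le_trans hp2 (Nat.le_self_pow hm.ne' p)
  have frob : ∀ (x y : k) (j : ℕ),
      (x + y) ^ (p ^ m) ^ j = x ^ (p ^ m) ^ j + y ^ (p ^ m) ^ j := by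
    intro x y j
    rw [← pow_mul]
    exact add_pow_char_pow x y p (m * j)
  have key : β ^ p ^ m = β ^ 2 → ∀ N : ℕ, (p ^ m - 2) ∣ ((p ^ m) ^ N - 1) →
      β ^ (p ^ m) ^ N = β := by
    intro hβ N hd
    rcases eq_or_ne β 0 with rfl | hβ0
    · rw [zero_pow]
      exact pow_ne_zero _ (by omega)
    · have h1 : β ^ (p ^ m - 2) = 1 := by
        have h2 : β ^ (p ^ m - 2) * β ^ 2 = 1 * β ^ 2 := by
          rw [← pow_add, one_mul, ← hβ]
          congr 1
          omega
        exact mul_right_cancel₀ (pow_ne_zero _ hβ0) h2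
      obtain ⟨c, hc⟩ := hd
      have hpow : (p ^ m) ^ N = (p ^ m - 2) * c + 1 := by
        have : 1 ≤ (p ^ m) ^ N := Nat.one_le_pow _ _ (by omega)
        omega
      rw [hpow, pow_add, pow_mul, h1, one_pow, one_mul, pow_one]
  have hd2 : (p ^ m - 2) ∣ ((p ^ m) ^ (2 * n) - 1) := by
    refine hdvd.trans ?_
    have h : (p ^ m) ^ (2 * n) = ((p ^ m) ^ n) ^ 2 := by
      rw [Nat.mul_comm 2 n, pow_mul]
    rw [h]
    simpa using Nat.sub_dvd_pow_sub_pow ((p ^ m) ^ n) 1 2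
  rw [tangentSpan, Submodule.mem_span_pair]
  constructor
  · rintro ⟨a, b, hab⟩
    have h0 := congrFun hab 0
    have h1 := congrFun hab 1
    have h2 := congrFun hab 2
    simp [curveVec, curveVec'] at h0 h1 h2
    subst h0
    have hb : b = β := by linear_combination h1
    subst hb
    rw [add_pow_char_pow t b p m] at h2
    linear_combination h2
  · intro hβ
    have hn1 : β ^ (p ^ m) ^ n = β := key hβ n hdvd
    have hn2 : β ^ (p ^ m) ^ (2 * n) = β := key hβ (2 * n) hd2
    refine ⟨1, β, ?_⟩
    funext i
    fin_cases i
    · simp [curveVec, curveVec']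
    · simp [curveVec, curveVec']
    · simp only [curveVec, curveVec']
      simp only [Pi.add_apply, Pi.smul_apply, smul_eq_mul, Matrix.cons_val_zero,
        Matrix.cons_val_one, Matrix.head_cons]
      simp
      rw [add_pow_char_pow t β p m]
      linear_combination hβ
    · simp [curveVec, curveVec']
      rw [frob t β n, frob t β (2 * n)]
      linear_combination hn2 - hn1
    · simp [curveVec, curveVec']
      rw [frob t β n, frob t β (2 * n)]
      linear_combination (t + β) * hn2 - (t + β) * hn1
end

section
/- For every t ∈ k, the set {u ∈ k : u ≠ t and v(u) ∈ T(t)} has exactly q − 2 elements; that is, the tangent line to the curve at the point of parameter t meets the affine part of the curve in exactly q − 2 points besides the point of tangency. -/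
/-! Write `u = s + t`. Since `x ↦ x ^ q` is additive, the first three coordinates of
`v(u) ∈ T(t)` force `v(u) = v(t) + s • v'(t)` and `s ^ q = s ^ 2`, i.e. `s ^ (q - 2) = 1` when
`s ≠ 0`. Conversely such an `s` satisfies `s ^ q ^ n = s` because `q - 2 ∣ q ^ n - 1`, which makes
the last two coordinates agree as well. So the set is a translate of the `(q - 2)`-th roots of
unity, and there are `q - 2` of them since `p ∤ q - 2`. -/

theorem add_pow_pow_of_eq_expChar_pow {R : Type*} [CommSemiring R] {p q m : ℕ} [ExpChar R p]
    (hq : q = p ^ m) (x y : R) (j : ℕ) :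
    (x + y) ^ q ^ j = x ^ q ^ j + y ^ q ^ j := by
  rw [hq, ← pow_mul]
  exact add_pow_expChar_pow x y p (m * j)

theorem pow_sub_two_eq_one_iff {G : Type*} [GroupWithZero G] {q : ℕ} (hq : 3 ≤ q) {s : G} :
    s ^ (q - 2) = 1 ↔ s ≠ 0 ∧ s ^ q = s ^ 2 := by
  have hq' : q = q - 2 + 2 := by omega
  constructor
  · intro hs
    refine ⟨fun h0 => by simp [h0, zero_pow (by omega : q - 2 ≠ 0)] at hs, ?_⟩
    rw [hq', pow_add, hs, one_mul]
  · rintro ⟨hs0, hsq⟩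
    rw [hq', pow_add] at hsq
    exact mul_eq_right₀ (pow_ne_zero 2 hs0) |>.mp hsq

theorem pow_eq_self_of_pow_eq_one {M : Type*} [Monoid M] {s : M} {d N : ℕ} (hs : s ^ d = 1)
    (hd : d ∣ N - 1) (hN : 1 ≤ N) : s ^ N = s := by
  obtain ⟨c, hc⟩ := hd
  rw [← Nat.sub_add_cancel hN, pow_succ, hc, pow_mul, hs, one_pow, one_mul]

theorem IsSepClosed.card_nthRootsFinset_one (k : Type*) [Field k] [IsSepClosed k] (d : ℕ)
    [NeZero (d : k)] : (Polynomial.nthRootsFinset d (1 : k)).card = d := by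
  obtain ⟨ζ, hζ⟩ := HasEnoughRootsOfUnity.exists_primitiveRoot k d
  exact hζ.card_nthRootsFinset

section TangentLine

variable {k : Type*} [Field k] {p q m n : ℕ} [ExpChar k p]

theorem sub_pow_eq_sq_of_curveVec_mem_tangentSpan (hq : q = p ^ m) {t u : k}
    (h : curveVec q n u ∈ tangentSpan k q n t) : (u - t) ^ q = (u - t) ^ 2 := by
  obtain ⟨a, b, hab⟩ := Submodule.mem_span_pair.mp h
  have h0 := congrFun hab 0
  have h1 := congrFun hab 1
  have h2 := congrFun hab 2
  simp only [curveVec, curveVec', Pi.add_apply, Pi.smul_apply, smul_eq_mul,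
    Matrix.cons_val_zero, Matrix.cons_val_one, Matrix.head_cons,
    Matrix.cons_val_two, Matrix.tail_cons] at h0 h1 h2
  have ha : a = 1 := by linear_combination h0
  have hb : b = u - t := by linear_combination h1 - t * h0
  rw [hq, sub_pow_expChar_pow, ← hq]
  linear_combination h2 - (t ^ 2 - t ^ q) * ha - 2 * t * hb

theorem curveVec_add_mem_tangentSpan (hq : q = p ^ m) {s : k} (hsq : s ^ q = s ^ 2)
    (hsn : s ^ q ^ n = s) (t : k) : curveVec q n (s + t) ∈ tangentSpan k q n t := by
  have hs2n : s ^ q ^ (2 * n) = s := by rw [mul_comm, pow_mul, sq, pow_mul, hsn, hsn]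
  have hF := add_pow_pow_of_eq_expChar_pow hq s t
  have hF1 : (s + t) ^ q = s ^ q + t ^ q := by simpa using hF 1
  refine Submodule.mem_span_pair.mpr ⟨1, s, funext fun i => ?_⟩
  fin_cases i <;>
    simp [curveVec, curveVec', hF1, hF n, hF (2 * n), hsq, hsn, hs2n] <;> ring

theorem setOf_ne_and_curveVec_mem_tangentSpan (hq : q = p ^ m) (hq3 : 3 ≤ q)
    (hdvd : (q - 2) ∣ (q ^ n - 1)) (t : k) :
    {u : k | u ≠ t ∧ curveVec q n u ∈ tangentSpan k q n t}
      = (· + t) '' (Polynomial.nthRootsFinset (q - 2) (1 : k) : Set k) := by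
  ext u
  simp only [Set.mem_ofPred_eq, Set.mem_image, Finset.mem_coe,
    Polynomial.mem_nthRootsFinset (by omega : 0 < q - 2)]
  constructor
  · rintro ⟨hut, hmem⟩
    refine ⟨u - t, ?_, sub_add_cancel u t⟩
    exact (pow_sub_two_eq_one_iff hq3).mpr
      ⟨sub_ne_zero.mpr hut, sub_pow_eq_sq_of_curveVec_mem_tangentSpan hq hmem⟩
  · rintro ⟨s, hs, rfl⟩
    obtain ⟨hs0, hsq⟩ := (pow_sub_two_eq_one_iff hq3).mp hs
    have hsn : s ^ q ^ n = s := pow_eq_self_of_pow_eq_one hs hdvd (Nat.one_le_pow _ _ (by omega))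
    exact ⟨by simpa using hs0, curveVec_add_mem_tangentSpan hq hsq hsn t⟩

end TangentLine

theorem natCast_sub_two_ne_zero (k : Type*) [AddGroupWithOne k] {p q : ℕ} [CharP k p]
    (hp2 : 2 < p) (hpq : p ∣ q) (hq : 2 ≤ q) : ((q - 2 : ℕ) : k) ≠ 0 := by
  rw [Ne, CharP.cast_eq_zero_iff k p]
  intro hdvd
  have : p ∣ 2 := by simpa [Nat.sub_sub_self hq] using Nat.dvd_sub hpq hdvd
  exact absurd (Nat.le_of_dvd two_pos this) (by omega)

theorem stmt2_general (k : Type*) [Field k] [IsAlgClosed k] (p q n : ℕ)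
    [CharP k p] (hp2 : 2 < p) (hq : ∃ m : ℕ, 0 < m ∧ q = p ^ m)
    (hdvd : (q - 2) ∣ (q ^ n - 1)) (t : k) :
    {u : k | u ≠ t ∧ curveVec q n u ∈ tangentSpan k q n t}.ncard = q - 2 := by
  obtain ⟨m, hm0, rfl⟩ := hq
  have : ExpChar k p := ExpChar.prime (CharP.char_is_prime_of_two_le k p hp2.le)
  have hq3 : 3 ≤ p ^ m := hp2.trans_le (Nat.le_self_pow hm0.ne' p)
  have : NeZero ((p ^ m - 2 : ℕ) : k) :=
    ⟨natCast_sub_two_ne_zero k hp2 (dvd_pow_self p hm0.ne') (by omega)⟩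
  rw [setOf_ne_and_curveVec_mem_tangentSpan rfl hq3 hdvd,
    Set.ncard_image_of_injective _ (add_left_injective t), Set.ncard_coe_finset,
    IsSepClosed.card_nthRootsFinset_one]

theorem stmt2 (k : Type*) [Field k] [IsAlgClosed k] (p q n : ℕ) (hp : p.Prime)
    [CharP k p] (hp2 : 2 < p) (hq : ∃ m : ℕ, 0 < m ∧ q = p ^ m) (hn : 1 ≤ n)
    (hdvd : (q - 2) ∣ (q ^ n - 1)) (t : k) :
    {u : k | u ≠ t ∧ curveVec q n u ∈ tangentSpan k q n t}.ncard = q - 2 :=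
  stmt2_general k p q n hp2 hq hdvd t
end

section
/- The Gauss map of the curve is birational onto its image in the following sense: the map k → {k-submodules of k^5} sending t to the tangent span T(t) is injective. -/
theorem stmt4 (k : Type*) [Field k] [IsAlgClosed k] (p q n : ℕ) (hp : p.Prime)
    [CharP k p] (hp2 : 2 < p) (hq : ∃ m : ℕ, 0 < m ∧ q = p ^ m) (hn : 1 ≤ n)
    (hdvd : (q - 2) ∣ (q ^ n - 1)) :
    Function.Injective (tangentSpan k q n) := by
  intro s t h
  have hs : curveVec' q n s ∈ tangentSpan k q n t := by
    rw [← h]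
    exact Submodule.subset_span (by simp)
  rw [tangentSpan, Submodule.mem_span_pair] at hs
  obtain ⟨c, d, hcd⟩ := hs
  have h0 := congrFun hcd 0
  have h1 := congrFun hcd 1
  have h2 := congrFun hcd 2
  simp [curveVec, curveVec'] at h0 h1 h2
  subst h0
  simp at h1 h2
  subst h1
  simp at h2
  have h2ne : (2 : k) ≠ 0 := by
    have : ((2 : ℕ) : k) ≠ 0 := by
      rw [Ne, CharP.cast_eq_zero_iff k p]
      intro hdv
      have := Nat.le_of_dvd (by norm_num) hdv
      omega
    simpa using this
  rcases h2 with h | h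
  · exact h.symm
  · exact absurd h h2ne
end

section
/- The homogeneous map Φ : k^2 → k^5 given by Φ(s, t) = (s^{q^{2n}+1}, s^{q^{2n}} t, s^{q^{2n}−1} t^2 − s^{q^{2n}−q+1} t^q, s^{q^{2n}−q^n+1} t^{q^n} − s t^{q^{2n}}, s^{q^{2n}−q^n} t^{q^n+1} − t^{q^{2n}+1}) sends every nonzero vector of k^2 to a nonzero vector of k^5, and the induced map from the projective line P(k^2) to P(k^5) is injective. (This is the extension of φ(1:t) = (1 : t : t^2 − t^q : t^{q^n} − t^{q^{2n}} : t(t^{q^n} − t^{q^{2n}})) to all of P^1.) -/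
/-- The homogeneous extension `Φ : k² → k⁵` of the parametrization
`φ(1:t) = (1 : t : t² − t^q : t^{qⁿ} − t^{q^{2n}} : t(t^{qⁿ} − t^{q^{2n}}))`. -/
def PhiVec {k : Type*} [Field k] (q n : ℕ) (s t : k) : Fin 5 → k :=
  ![s ^ (q ^ (2 * n) + 1),
    s ^ q ^ (2 * n) * t,
    s ^ (q ^ (2 * n) - 1) * t ^ 2 - s ^ (q ^ (2 * n) - q + 1) * t ^ q,
    s ^ (q ^ (2 * n) - q ^ n + 1) * t ^ q ^ n - s * t ^ q ^ (2 * n),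
    s ^ (q ^ (2 * n) - q ^ n) * t ^ (q ^ n + 1) - t ^ (q ^ (2 * n) + 1)]

theorem stmt5 (k : Type*) [Field k] [IsAlgClosed k] (p q n : ℕ) (hp : p.Prime)
    [CharP k p] (hp2 : 2 < p) (hq : ∃ m : ℕ, 0 < m ∧ q = p ^ m) (hn : 1 ≤ n)
    (hdvd : (q - 2) ∣ (q ^ n - 1)) :
    (∀ s t : k, (s, t) ≠ (0, 0) → PhiVec q n s t ≠ 0) ∧
      (∀ s t s' t' : k, (s, t) ≠ (0, 0) → (s', t') ≠ (0, 0) →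
        (∃ c : k, c ≠ 0 ∧ PhiVec q n s' t' = c • PhiVec q n s t) →
        ∃ c : k, c ≠ 0 ∧ s' = c * s ∧ t' = c * t) := by
  obtain ⟨m, hm, rfl⟩ := hq
  -- basic numeric facts
  have hq3 : 3 ≤ p ^ m := by
    calc 3 ≤ p := hp2
    _ = p ^ 1 := (pow_one p).symm
    _ ≤ p ^ m := Nat.pow_le_pow_right hp.pos hm
  set q := p ^ m with hqdef
  have hq1 : 1 < q := by omega
  have hQn : q ^ n < q ^ (2 * n) := Nat.pow_lt_pow_right hq1 (by omega)
  have hsub : q ^ (2 * n) - q ^ n ≠ 0 := by omega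
  constructor
  · -- nonvanishing
    intro s t hst h
    by_cases hs : s = 0
    · have ht : t ≠ 0 := by
        intro h'; exact hst (by simp [hs, h'])
      have h4 := congrFun h 4
      simp [PhiVec, hs, zero_pow hsub] at h4
      exact ht h4
    · have h0 := congrFun h 0
      simp [PhiVec] at h0
      exact hs h0
  · -- injectivity
    intro s t s' t' hst hst' ⟨c, hc, heq⟩
    have h0 := congrFun heq 0
    have h1 := congrFun heq 1
    simp only [PhiVec, Pi.smul_apply, smul_eq_mul, Matrix.cons_val_zero,
      Matrix.cons_val_one, Matrix.head_cons] at h0 h1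
    by_cases hs : s = 0
    · have ht : t ≠ 0 := by intro h'; exact hst (by simp [hs, h'])
      have hs' : s' = 0 := by
        rw [hs, zero_pow (by omega : q ^ (2 * n) + 1 ≠ 0), mul_zero] at h0
        exact (pow_eq_zero_iff (by omega)).mp h0
      have ht' : t' ≠ 0 := by intro h'; exact hst' (by simp [hs', h'])
      refine ⟨t' * t⁻¹, mul_ne_zero ht' (inv_ne_zero ht), ?_, ?_⟩
      · simp [hs, hs']
      · field_simp
    · have hs' : s' ≠ 0 := by
        intro h'
        apply mul_ne_zero hc (pow_ne_zero (q ^ (2 * n) + 1) hs)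
        rw [← h0, h', zero_pow (by omega : q ^ (2 * n) + 1 ≠ 0)]
      have key : s' ^ (q ^ (2 * n)) * (s * t') = s' ^ (q ^ (2 * n)) * (s' * t) := by
        linear_combination s * h1 - t * h0
      have key2 : s * t' = s' * t :=
        mul_left_cancel₀ (pow_ne_zero _ hs') key
      refine ⟨s' * s⁻¹, mul_ne_zero hs' (inv_ne_zero hs), ?_, ?_⟩
      · field_simp
      · field_simp
        linear_combination key2
end

section
/- The k-linear span in K of the set {h^p : h ∈ K, σ(h) = h} (the p-th powers of the fixed field of σ) is infinite-dimensional over k. -/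
theorem stmt8 (k K : Type*) [Field k] [IsAlgClosed k] [Field K] [Algebra k K]
    (p : ℕ) (hp : 0 < p) [CharP k p]
    -- `K` is a finitely generated field extension of `k` of transcendence degree 1:
    -- there is an element transcendental over `k` over whose rational function field
    -- `K` is a finite extension.
    (hK : ∃ x : K, Transcendental k x ∧
      FiniteDimensional ↥(IntermediateField.adjoin k ({x} : Set K)) K)
    (σ : K ≃ₐ[k] K) (hσ : IsOfFinOrder σ) :
    ¬ FiniteDimensional k
        ↥(Submodule.span k {y : K | ∃ h : K, σ h = h ∧ h ^ p = y}) := by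
  obtain ⟨x, hxt, -⟩ := hK
  set G := Subgroup.zpowers σ with hG
  haveI : Finite G := (finite_zpowers.mpr hσ).to_subtype
  -- there exists a σ-fixed element transcendental over k
  have hy : ∃ y : K, σ y = y ∧ Transcendental k y := by
    by_contra hcon
    push_neg at hcon
    have hint : IsIntegral (FixedPoints.subfield G K) x := FixedPoints.isIntegral G K x
    obtain ⟨Q, hQm, hQ0⟩ := hint
    set P : Polynomial K := Q.map (FixedPoints.subfield G K).subtype with hP
    have hPm : P.Monic := hQm.map _
    have hcoeff : ∀ n, IsIntegral k (P.coeff n) := by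
      intro n
      rw [hP, Polynomial.coeff_map]
      have hfix : σ ((Q.coeff n : K)) = (Q.coeff n : K) :=
        (Q.coeff n).2 ⟨σ, Subgroup.mem_zpowers σ⟩
      have := hcon _ hfix
      rw [Transcendental, not_not] at this
      exact this.isIntegral
    have hl : P ∈ Polynomial.lifts (algebraMap (integralClosure k K) K) := by
      rw [Polynomial.lifts_iff_coeff_lifts]
      intro n
      exact ⟨⟨P.coeff n, hcoeff n⟩, rfl⟩
    obtain ⟨R, hmap, -, hRm⟩ := Polynomial.lifts_and_degree_eq_and_monic hl hPm
    have hxint : IsIntegral (integralClosure k K) x := by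
      refine ⟨R, hRm, ?_⟩
      rw [← Polynomial.eval_map, hmap, hP, Polynomial.eval_map]
      exact hQ0
    exact hxt (isIntegral_trans (A := integralClosure k K) x hxint).isAlgebraic
  obtain ⟨y, hyfix, hyt⟩ := hy
  intro hFD
  have hz : Transcendental k (y ^ p) := hyt.pow hp
  -- powers of y^p are linearly independent over k
  have li : LinearIndependent k fun n : ℕ => (y ^ p) ^ n := by
    have hinj : Function.Injective (Polynomial.aeval (y ^ p) : Polynomial k →ₐ[k] K) :=
      transcendental_iff_injective.mp hz
    have h2 := ((Polynomial.basisMonomials k).linearIndependent).map'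
      (Polynomial.aeval (y ^ p) : Polynomial k →ₐ[k] K).toLinearMap
      (by rw [LinearMap.ker_eq_bot]; exact hinj)
    have h3 : ((Polynomial.aeval (y ^ p) : Polynomial k →ₐ[k] K).toLinearMap ∘
        fun n : ℕ => (Polynomial.basisMonomials k) n) = fun n : ℕ => (y ^ p) ^ n := by
      funext n
      simp [Polynomial.coe_basisMonomials, Polynomial.aeval_monomial]
    rwa [h3] at h2
  -- each (y^p)^n lies in the span
  have hmem : ∀ n : ℕ, (y ^ p) ^ n ∈
      Submodule.span k {y : K | ∃ h : K, σ h = h ∧ h ^ p = y} := by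
    intro n
    apply Submodule.subset_span
    exact ⟨y ^ n, by rw [map_pow, hyfix], by ring⟩
  have li2 : LinearIndependent k fun n : ℕ =>
      (⟨(y ^ p) ^ n, hmem n⟩ : ↥(Submodule.span k {y : K | ∃ h : K, σ h = h ∧ h ^ p = y})) := by
    apply LinearIndependent.of_comp (Submodule.span k _).subtype
    exact li
  exact Module.Finite.not_linearIndependent_of_infinite _ li2
end

section
/- There exists h ∈ K with σ(h) = h such that, setting y := h^p, one has: y ∉ k, the field K is generated over k by x and y (K = k(x, y)), and y does not lie in the k-linear span of {1, x}. -/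
/-!
`K` has prime degree over the fixed field `S` of `σ`, and `x ∉ S`, so `S` and `k(x)` generate
`K`. As `K / k(x)` has only finitely many intermediate fields and `k` is infinite, the `k`-space
`S` is not covered by `k` and the proper intermediate fields; this gives `h ∈ S \ k` with
`K = k(x)(h)`. Since `h` is separable over `k(x)`, also `K = k(x)(h ^ p)`. Finally `h ^ p ∉ k`
because `k` is perfect, and `h ^ p ∉ k + k x` because `σ` fixes `h ^ p` but not `x`.
-/

open IntermediateField Module

namespace IntermediateField

variable {F E : Type*} [Field F] [Field E] [Algebra F E]

lemma mem_fixedField_zpowers_iff (σ : E ≃ₐ[F] E) (a : E) :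
    a ∈ fixedField (Subgroup.zpowers σ) ↔ σ a = a := by
  rw [mem_fixedField_iff, Subgroup.forall_mem_zpowers]
  simpa only [MulAction.mem_fixedBy, AlgEquiv.smul_def] using
    MulAction.mem_fixedBy_zpowers_iff_mem_fixedBy (α := E) (g := σ) (a := a)

lemma finrank_fixedField_eq_card_of_finite (H : Subgroup (E ≃ₐ[F] E)) [Finite H] :
    finrank (fixedField H) E = Nat.card H := by
  have := Fintype.ofFinite H
  rw [Nat.card_eq_fintype_card]
  exact FixedPoints.finrank_eq_card H E

lemma eq_top_of_finrank_prime {S T : IntermediateField F E} (hS : (finrank S E).Prime)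
    (hST : S ≤ T) (hTS : ¬ T ≤ S) : T = ⊤ := by
  have := isSimpleOrder_of_finrank_prime S E hS
  rcases eq_bot_or_eq_top (extendScalars hST) with h | h
  · refine absurd (fun a ha => ?_) hTS
    have : a ∈ extendScalars hST := ha
    rw [h, mem_bot] at this
    obtain ⟨s, rfl⟩ := this
    exact s.2
  · rw [← extendScalars_restrictScalars hST, h, restrictScalars_top]

lemma adjoin_eq_top_of_finrank_prime {S L : IntermediateField F E} (hS : (finrank S E).Prime)
    (hLS : ¬ L ≤ S) : adjoin L (S : Set E) = ⊤ := by
  rw [← restrictScalars_eq_top_iff (K := F)]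
  refine eq_top_of_finrank_prime hS (fun s hs => subset_adjoin L (S : Set E) hs)
    fun hle => hLS fun l hl => hle ?_
  exact (adjoin L _).algebraMap_mem ⟨l, hl⟩

lemma not_le_bot_of_transcendental {S : IntermediateField F E} (hS : 0 < finrank S E) {x : E}
    (hx : Transcendental F x) : ¬ S ≤ ⊥ := by
  intro hle
  rw [le_bot_iff] at hle
  subst hle
  rw [finrank_bot'] at hS
  have := Module.finite_of_finrank_pos hS
  exact hx (Algebra.IsAlgebraic.isAlgebraic x)

end IntermediateField

theorem exists_mem_notMem_and_adjoin_simple_eq_top (k : Type*) {F E : Type*} [Field k] [Infinite k]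
    [Field F] [Field E] [Algebra k F] [Algebra F E] [Algebra k E] [IsScalarTower k F E]
    [Finite (IntermediateField F E)] {V W : Submodule k E} (hV : adjoin F (V : Set E) = ⊤)
    (hVW : ¬ V ≤ W) : ∃ v ∈ V, v ∉ W ∧ F⟮v⟯ = ⊤ := by
  by_contra! h
  let P : Option {N : IntermediateField F E // N ≠ ⊤} → Submodule k V
    | none => W.comap V.subtype
    | some N => (N.1.toSubalgebra.toSubmodule.restrictScalars k).comap V.subtype
  have hcover : ⋃ i, (P i : Set V) = Set.univ := by
    refine Set.eq_univ_of_forall fun v => Set.mem_iUnion.mpr ?_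
    by_cases hv : (v : E) ∈ W
    · exact ⟨none, hv⟩
    · exact ⟨some ⟨F⟮(v : E)⟯, h v v.2 hv⟩, mem_adjoin_simple_self F (v : E)⟩
  obtain ⟨_ | ⟨N, hN⟩, hi⟩ := Subspace.exists_eq_top_of_iUnion_eq_univ hcover
  · exact hVW fun v hv => (Submodule.eq_top_iff'.mp hi ⟨v, hv⟩ :)
  · refine hN (top_le_iff.mp (hV ▸ adjoin_le_iff.mpr fun v hv => ?_))
    exact (Submodule.eq_top_iff'.mp hi ⟨v, hv⟩ :)

lemma mem_range_algebraMap_of_pow_mem {k K : Type*} [Field k] [Field K] [Algebra k K] (p : ℕ)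
    [ExpChar k p] [PerfectRing k p] [ExpChar K p] {h : K}
    (hh : h ^ p ∈ Set.range (algebraMap k K)) : h ∈ Set.range (algebraMap k K) := by
  obtain ⟨c, hc⟩ := hh
  obtain ⟨d, rfl⟩ := surjective_frobenius k p c
  rw [frobenius_def] at hc
  exact ⟨d, frobenius_inj K p (by rw [frobenius_def, ← map_pow, hc, frobenius_def])⟩

lemma AlgEquiv.mem_range_algebraMap_of_mem_span_pair_one {k K : Type*} [Field k] [Field K]
    [Algebra k K] (σ : K ≃ₐ[k] K) {x y : K} (hx : σ x ≠ x) (hy : σ y = y)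
    (hmem : y ∈ Submodule.span k ({1, x} : Set K)) : y ∈ Set.range (algebraMap k K) := by
  obtain ⟨a, b, rfl⟩ := Submodule.mem_span_pair.mp hmem
  have hb : b • (σ x - x) = 0 := by
    rw [map_add, map_smul, map_smul, map_one] at hy
    rw [smul_sub]; linear_combination hy
  obtain rfl : b = 0 := (smul_eq_zero.mp hb).resolve_right (sub_ne_zero.mpr hx)
  exact ⟨a, by simp [Algebra.algebraMap_eq_smul_one]⟩

theorem stmt9 (k K : Type*) [Field k] [IsAlgClosed k] [Field K] [Algebra k K]
    (p : ℕ) (hp : 0 < p) [CharP k p]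
    (x : K) (hx : Transcendental k x)
    [FiniteDimensional ↥(IntermediateField.adjoin k ({x} : Set K)) K]
    [Algebra.IsSeparable ↥(IntermediateField.adjoin k ({x} : Set K)) K]
    (σ : K ≃ₐ[k] K) (hord : (orderOf σ).Prime) (hσx : σ x ≠ x) :
    ∃ h : K, σ h = h ∧
      h ^ p ∉ Set.range (algebraMap k K) ∧
      IntermediateField.adjoin k ({x, h ^ p} : Set K) = ⊤ ∧
      h ^ p ∉ Submodule.span k ({1, x} : Set K) := by
  have : Fact p.Prime := ⟨(CharP.char_is_prime_or_zero k p).resolve_right hp.ne'⟩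
  have : CharP K p := charP_of_injective_algebraMap (algebraMap k K).injective p
  set L := adjoin k ({x} : Set K)
  have : CharP L p := charP_of_injective_algebraMap (algebraMap k L).injective p
  have : Finite (IntermediateField L K) :=
    Field.finite_intermediateField_of_exists_primitive_element L K
      (Field.exists_primitive_element L K)
  set S := fixedField (Subgroup.zpowers σ)
  have hSK : finrank S K = orderOf σ := by
    have : Finite (Subgroup.zpowers σ) := (orderOf_pos_iff.mp hord.pos).finite_zpowers
    rw [finrank_fixedField_eq_card_of_finite, Nat.card_zpowers]
  have hxS : x ∉ S := fun hxS => hσx ((mem_fixedField_zpowers_iff σ x).mp hxS)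
  have hSL : adjoin L (S : Set K) = ⊤ :=
    adjoin_eq_top_of_finrank_prime (hSK ▸ hord) fun hle => hxS (hle (mem_adjoin_simple_self k x))
  have hSk : ¬ Subalgebra.toSubmodule S.toSubalgebra ≤ 1 := fun hle =>
    not_le_bot_of_transcendental (hSK ▸ hord.pos) hx fun s hs =>
      mem_bot.mpr (Submodule.mem_one.mp (hle hs))
  obtain ⟨h, hhS, hhk, hLh⟩ :=
    exists_mem_notMem_and_adjoin_simple_eq_top k (F := L)
      (V := Subalgebra.toSubmodule S.toSubalgebra) hSL hSk
  have hσh := (mem_fixedField_zpowers_iff σ h).mp hhS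
  have hpk : h ^ p ∉ Set.range (algebraMap k K) := fun hmem =>
    hhk (Submodule.mem_one.mpr (mem_range_algebraMap_of_pow_mem p hmem))
  refine ⟨h, hσh, hpk, ?_, fun hmem => hpk
    (σ.mem_range_algebraMap_of_mem_span_pair_one hσx (by rw [map_pow, hσh]) hmem)⟩
  rw [adjoin_simple_eq_adjoin_pow_expChar_of_isSeparable' L K h p] at hLh
  rw [← Set.singleton_union, ← adjoin_adjoin_left, hLh, restrictScalars_top]
end

section
/- Assume k has characteristic p > 0, and that σ(x) = x + α for some α ∈ k \ {0}. Let n ≥ 1 be an integer and β ∈ k with β·α^{p^n} + α^2 = 0. Then x^2 + β·x^{p^n} ∈ V_{σ,x}; that is, σ(x^2 + β x^{p^n}) − (x^2 + β x^{p^n}) = α·D(x^2 + β x^{p^n}). -/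
theorem stmt10 (k K : Type*) [Field k] [Field K] [Algebra k K]
    (p : ℕ) [CharP k p] (hp : 0 < p)
    (σ : K ≃ₐ[k] K) (D : Derivation k K K) (x : K) (hx : D x = 1)
    (α : k) (hα : α ≠ 0) (hσx : σ x = x + algebraMap k K α)
    (n : ℕ) (hn : 1 ≤ n) (β : k) (hβ : β * α ^ p ^ n + α ^ 2 = 0) :
    σ (x ^ 2 + algebraMap k K β * x ^ p ^ n)
        - (x ^ 2 + algebraMap k K β * x ^ p ^ n)
      = algebraMap k K α * D (x ^ 2 + algebraMap k K β * x ^ p ^ n) := by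
  have hprime : p.Prime := (CharP.char_is_prime_or_zero k p).resolve_right (by omega)
  haveI := Fact.mk hprime
  haveI : CharP K p := charP_of_injective_algebraMap (algebraMap k K).injective p
  set a := algebraMap k K α with ha
  set b := algebraMap k K β with hb
  have hpnK : ((p ^ n : ℕ) : K) = 0 := by
    push_cast
    rw [CharP.cast_eq_zero K p, zero_pow (by omega)]
  have hfrob : (x + a) ^ p ^ n = x ^ p ^ n + a ^ p ^ n := add_pow_char_pow x a p n
  have hkey : b * a ^ p ^ n + a ^ 2 = 0 := by
    rw [ha, hb, ← map_pow, ← map_pow, ← map_mul, ← map_add, hβ, map_zero]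
  -- LHS
  have hσb : σ b = b := σ.commutes β
  have hL : σ (x ^ 2 + b * x ^ p ^ n) - (x ^ 2 + b * x ^ p ^ n)
      = a * (2 * x) := by
    rw [map_add, map_pow, map_mul, map_pow, hσx, hσb, hfrob]
    have : (x + a) ^ 2 = x ^ 2 + 2 * a * x + a ^ 2 := by ring
    rw [this]
    have : b * (x ^ p ^ n + a ^ p ^ n) = b * x ^ p ^ n + b * a ^ p ^ n := by ring
    rw [this]
    have := hkey
    linear_combination this
  -- RHS
  have hD : D (x ^ 2 + b * x ^ p ^ n) = 2 * x := by
    rw [map_add, Derivation.leibniz_pow, Derivation.leibniz, Derivation.leibniz_pow, hx]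
    have hD2 : D b = 0 := by rw [hb]; exact D.map_algebraMap β
    rw [hD2]
    simp only [smul_eq_mul, mul_one, mul_zero, zero_mul, nsmul_eq_mul]
    rw [hpnK]
    push_cast
    ring
  rw [hL, hD]
end

section
/- If σ(x) = x + α for some α ∈ k \ {0}, then σ has finite order, and its order is divisible by p. -/
/-!
The translation `σ` satisfies `σⁿ x = x + n • α`. Since `p • α = 0`, the power `σ ^ p` fixes `x`,
hence the whole field `k(x)`, so it lies in a group isomorphic to `Gal(K/k(x))`, which is finite
because `K` is finite over `k(x)`. Conversely `σⁿ = 1` forces `n • α = 0`, i.e. `p ∣ n`.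
-/

namespace AlgEquiv

variable {k A : Type*}

theorem pow_apply_of_apply_eq_add [CommSemiring k] [Semiring A] [Algebra k A]
    {σ : A ≃ₐ[k] A} {x : A} {α : k} (hσx : σ x = x + algebraMap k A α) (n : ℕ) :
    (σ ^ n) x = x + algebraMap k A (n • α) := by
  induction n with
  | zero => simp
  | succ n ih => rw [pow_succ', mul_apply, ih, map_add, hσx, commutes, succ_nsmul', map_add, add_assoc]

theorem dvd_of_pow_eq_one_of_apply_eq_add [Field k] [Ring A] [Nontrivial A] [Algebra k A]
    (p : ℕ) [CharP k p] {σ : A ≃ₐ[k] A} {x : A} {α : k} (hα : α ≠ 0)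
    (hσx : σ x = x + algebraMap k A α) {n : ℕ} (hn : σ ^ n = 1) : p ∣ n := by
  have hnα : algebraMap k A (n • α) = 0 := by
    simpa [hn] using pow_apply_of_apply_eq_add hσx n
  rw [map_eq_zero_iff _ (algebraMap k A).injective, nsmul_eq_mul] at hnα
  exact (CharP.cast_eq_zero_iff k p n).mp ((mul_eq_zero.mp hnα).resolve_right hα)

end AlgEquiv

namespace IntermediateField

variable {k K : Type*} [Field k] [Field K] [Algebra k K]

theorem mem_fixingSubgroup_adjoin_singleton_iff {x : K} {σ : K ≃ₐ[k] K} :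
    σ ∈ (adjoin k {x}).fixingSubgroup ↔ σ x = x := by
  refine ⟨fun h ↦ h ⟨x, mem_adjoin_simple_self k x⟩, fun h ↦ ?_⟩
  have hcomp : σ.toAlgHom.comp (adjoin k {x}).val = (adjoin k {x}).val :=
    adjoin_algHom_ext k fun y hy ↦ by obtain rfl := Set.mem_singleton_iff.mp hy; exact h
  exact (mem_fixingSubgroup_iff _ σ).mpr fun y hy ↦ congr($hcomp ⟨y, hy⟩)

theorem isOfFinOrder_of_mem_fixingSubgroup {F : IntermediateField k K} [FiniteDimensional F K]
    {σ : K ≃ₐ[k] K} (hσ : σ ∈ F.fixingSubgroup) : IsOfFinOrder σ :=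
  have : Finite F.fixingSubgroup := .of_equiv _ (fixingSubgroupEquiv F).symm.toEquiv
  Submonoid.isOfFinOrder_coe.mpr (isOfFinOrder_of_finite (⟨σ, hσ⟩ : F.fixingSubgroup))

end IntermediateField

theorem stmt11_general (k K : Type*) [Field k] [Field K] [Algebra k K]
    (p : ℕ) (hp : 0 < p) [CharP k p]
    (x : K)
    [FiniteDimensional ↥(IntermediateField.adjoin k ({x} : Set K)) K]
    (σ : K ≃ₐ[k] K) (α : k) (hα : α ≠ 0)
    (hσx : σ x = x + algebraMap k K α) :
    IsOfFinOrder σ ∧ p ∣ orderOf σ := by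
  have hσp : (σ ^ p) x = x := by
    rw [AlgEquiv.pow_apply_of_apply_eq_add hσx, nsmul_eq_mul, CharP.cast_eq_zero, zero_mul,
      map_zero, add_zero]
  have hfin : IsOfFinOrder (σ ^ p) :=
    IntermediateField.isOfFinOrder_of_mem_fixingSubgroup
      (IntermediateField.mem_fixingSubgroup_adjoin_singleton_iff.mpr hσp)
  exact ⟨hfin.of_pow hp.ne',
    AlgEquiv.dvd_of_pow_eq_one_of_apply_eq_add p hα hσx (pow_orderOf_eq_one σ)⟩

theorem stmt11 (k K : Type*) [Field k] [Field K] [Algebra k K]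
    (p : ℕ) (hp : 0 < p) [CharP k p]
    (x : K) (hx : Transcendental k x)
    [FiniteDimensional ↥(IntermediateField.adjoin k ({x} : Set K)) K]
    (σ : K ≃ₐ[k] K) (α : k) (hα : α ≠ 0)
    (hσx : σ x = x + algebraMap k K α) :
    IsOfFinOrder σ ∧ p ∣ orderOf σ :=
  stmt11_general k K p hp x σ α hα hσx
end

section
/- For every integer N ≥ 3 there exist elements g₃, …, g_N ∈ K such that: (1) the family (1, x, y, g₃, …, g_N) is linearly independent over k; (2) σ(gᵢ) − gᵢ = α·D(gᵢ) for every i = 3, …, N; and (3) the subfield of K generated over k by {D(y), y − x·D(y)} ∪ {D(gᵢ), gᵢ − x·D(gᵢ) : i = 3, …, N} is equal to K. (This is the field-theoretic content of the existence of a birational morphism φ = (1 : x : y : g₃ : ⋯ : g_N) : X → P^N with nondegenerate image, with respect to which σ is non-classical and whose Gauss map is birational onto its image.) -/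
/-!
Take `gᵢ = x ^ q - α ^ (q - 2) * x ^ 2` with `q = p ^ (t + i)`. As `q = 0` in `k`,
`D gᵢ = -2 α ^ (q - 2) x`, and by Frobenius
`σ gᵢ - gᵢ = α ^ q - α ^ (q - 2) * ((x + α) ^ 2 - x ^ 2) = -2 α ^ (q - 1) x = α D gᵢ`.
These polynomials in `x` have distinct degrees `> 2`, so with `1` and `x` they are linearly
independent because `x` is transcendental. The spans obtained for the disjoint exponent ranges
`t = 0` and `t = N` meet in `span {1, x}`, so for one of them `y` lies outside the span.
Finally `D g₃` is a nonzero constant times `x`, so the Gauss-map data generate `x`, and then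
`y = (y - x D y) + x D y`.
-/

open Polynomial Set Submodule Function

noncomputable section

section LinearAlgebra

variable {ι R K V : Type*}

theorem LinearIndependent.mem_span_image_inter [Semiring R] [AddCommMonoid V] [Module R V]
    {v : ι → V} (hv : LinearIndependent R v) {s t : Set ι} {y : V}
    (hs : y ∈ span R (v '' s)) (ht : y ∈ span R (v '' t)) : y ∈ span R (v '' (s ∩ t)) := by
  rw [Finsupp.mem_span_image_iff_linearCombination] at hs ht ⊢
  obtain ⟨l, hls, rfl⟩ := hs
  obtain ⟨l', hlt, hll'⟩ := ht
  have hl : l' = l := hv hll'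
  exact ⟨l, Finsupp.supported_inter (M := R) (R := R) s t ▸ ⟨hls, hl ▸ hlt⟩, rfl⟩

variable [DivisionRing K] [AddCommGroup V] [Module K V]

theorem linearIndependent_of_notMem_span_image_compl {f : ι → V} (i : ι)
    (hf : LinearIndepOn K f {i}ᶜ) (hi : f i ∉ span K (f '' {i}ᶜ)) : LinearIndependent K f := by
  have hunion : insert i {i}ᶜ = (univ : Set ι) := by ext j; simp [eq_or_ne]
  rw [← linearIndepOn_univ_iff, ← hunion]
  exact hf.insert hi

theorem LinearIndependent.exists_notMem_span_image_shift {w : ℕ → V}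
    (hw : LinearIndependent K w) {y : V} (hy : y ∉ span K (w '' {0, 1})) (N : ℕ) :
    ∃ t, y ∉ span K (w '' ({0, 1} ∪ Icc (t + 3) (t + N))) := by
  by_contra! h
  refine hy (span_mono (image_mono ?_) (hw.mem_span_image_inter (h 0) (h N)))
  intro r
  simp only [mem_inter_iff, mem_union, mem_insert_iff, mem_singleton_iff, mem_Icc]
  omega

theorem LinearIndependent.linearIndependent_of_eq_shift {w : ℕ → V}
    (hw : LinearIndependent K w) {y : V} {t N : ℕ} (hN : 2 ≤ N)
    (hy : y ∉ span K (w '' ({0, 1} ∪ Icc (t + 3) (t + N)))) {f : Fin (N + 1) → V}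
    (hf2 : f ⟨2, by omega⟩ = y)
    (hf : ∀ i : Fin (N + 1), (i : ℕ) ≠ 2 → f i = w (if (i : ℕ) < 2 then i else t + i)) :
    LinearIndependent K f := by
  set e : Fin (N + 1) → ℕ := fun i => if (i : ℕ) < 2 then i else t + i
  have he : Injective e := by
    intro a b hab
    simp only [e] at hab
    ext
    split_ifs at hab <;> omega
  have hne : ∀ i ∈ ({⟨2, by omega⟩} : Set (Fin (N + 1)))ᶜ, (i : ℕ) ≠ 2 := fun i hi h =>
    hi (Fin.ext h)
  refine linearIndependent_of_notMem_span_image_compl ⟨2, by omega⟩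
    (((hw.comp e he).linearIndepOn _).congr fun i hi => (hf i (hne i hi)).symm) ?_
  rw [hf2]
  refine fun hmem => hy (span_mono ?_ hmem)
  rintro _ ⟨i, hi, rfl⟩
  refine ⟨e i, ?_, (hf i (hne i hi)).symm⟩
  have := hne i hi
  have := i.isLt
  simp only [e, mem_union, mem_insert_iff, mem_singleton_iff, mem_Icc]
  split_ifs <;> omega

end LinearAlgebra

theorem Polynomial.linearIndependent_of_natDegree_injective {ι K : Type*} [Field K]
    {f : ι → K[X]} (hf : ∀ i, f i ≠ 0) (hinj : Injective fun i => (f i).natDegree) :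
    LinearIndependent K f := by
  classical
  refine linearIndependent_iff'.mpr fun s g hsum i hi => by_contra fun hgi => ?_
  have hdeg : ∀ j, g j • f j ≠ 0 → (g j • f j).degree = (f j).degree := fun j hj =>
    degree_smul_of_smul_regular _ (IsSMulRegular.of_ne_zero (left_ne_zero_of_smul hj))
  have hpair : Set.Pairwise {j | j ∈ s ∧ g j • f j ≠ 0} (Ne on fun j => (g j • f j).degree) := by
    rintro j ⟨-, hj⟩ j' ⟨-, hj'⟩ hjj'
    simp only [onFun, hdeg j hj, hdeg j' hj', degree_eq_natDegree (hf j),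
      degree_eq_natDegree (hf j')]
    exact_mod_cast hinj.ne hjj'
  have hsup := degree_sum_eq_of_disjoint _ s hpair
  rw [hsum, degree_zero] at hsup
  exact smul_ne_zero hgi (hf i) (degree_eq_bot.mp (eq_bot_iff.mpr
    (hsup ▸ Finset.le_sup (f := fun j => (g j • f j).degree) hi)))

section TwistedPow

variable {k : Type*} [Field k]

def twistedPow (a : k) (q : ℕ) : k[X] := X ^ q - C (a ^ (q - 2)) * X ^ 2

theorem natDegree_twistedPow (a : k) {q : ℕ} (hq : 2 < q) : (twistedPow a q).natDegree = q := by
  unfold twistedPow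
  rw [natDegree_sub_eq_left_of_natDegree_lt] <;> rw [natDegree_X_pow]
  exact (natDegree_C_mul_X_pow_le _ 2).trans_lt hq

theorem derivative_twistedPow (a : k) {q : ℕ} (hq : (q : k) = 0) :
    derivative (twistedPow a q) = -C (2 * a ^ (q - 2)) * X := by
  rw [twistedPow, derivative_sub, derivative_X_pow, hq, C_0, zero_mul, derivative_C_mul_X_pow]
  simp only [map_mul, Nat.cast_ofNat, map_ofNat]
  ring

theorem twistedPow_comp_X_add_C_sub (p : ℕ) [Fact p.Prime] [CharP k p] (a : k) {n : ℕ}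
    (hn : n ≠ 0) :
    (twistedPow a (p ^ n)).comp (X + C a) - twistedPow a (p ^ n) =
      C a * derivative (twistedPow a (p ^ n)) := by
  have hq : ((p ^ n : ℕ) : k) = 0 := by simp [CharP.cast_eq_zero, hn]
  obtain ⟨m, hm⟩ : ∃ m, p ^ n = m + 2 :=
    ⟨p ^ n - 2, by have := (Fact.out : p.Prime).two_le; have := Nat.le_self_pow hn p; omega⟩
  rw [derivative_twistedPow a hq]
  simp only [twistedPow, sub_comp, pow_comp, X_comp, mul_comp, C_comp, add_pow_char_pow]
  rw [hm, Nat.add_sub_cancel]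
  simp only [pow_add, map_mul, map_pow, map_ofNat]
  ring

def twistedPowSeq (p : ℕ) (a : k) (r : ℕ) : k[X] :=
  if r = 0 then 1 else if r = 1 then X else twistedPow a (p ^ r)

theorem twistedPowSeq_of_two_le (p : ℕ) (a : k) {r : ℕ} (hr : 2 ≤ r) :
    twistedPowSeq p a r = twistedPow a (p ^ r) := by
  rw [twistedPowSeq, if_neg (by omega), if_neg (by omega)]

theorem linearIndependent_twistedPowSeq {p : ℕ} (hp : 2 ≤ p) (a : k) :
    LinearIndependent k (twistedPowSeq p a) := by
  have hbig : ∀ r, 2 ≤ r → 2 < p ^ r := fun r hr => (by omega : 2 < 2 ^ 2).trans_le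
    ((Nat.pow_le_pow_left hp 2).trans (Nat.pow_le_pow_right (by omega) hr))
  have hdeg : ∀ r, (twistedPowSeq p a r).natDegree = if r < 2 then r else p ^ r := by
    intro r
    rcases lt_or_ge r 2 with hr | hr
    · interval_cases r <;> simp [twistedPowSeq]
    · rw [twistedPowSeq_of_two_le p a hr, natDegree_twistedPow a (hbig r hr), if_neg (by omega)]
  refine linearIndependent_of_natDegree_injective (fun r h => ?_) fun r s hrs => ?_
  · have := hdeg r
    rw [h, natDegree_zero] at this
    split_ifs at this with hr
    · subst this; simp [twistedPowSeq] at h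
    · have := hbig r (by omega); omega
  · simp only [hdeg] at hrs
    split_ifs at hrs with hr hs hs
    · exact hrs
    · have := hbig s (by omega); omega
    · have := hbig r (by omega); omega
    · exact Nat.pow_right_injective hp hrs

variable {K : Type*} [Field K] [Algebra k K] {D : Derivation k K K} {x : K}

theorem derivation_aeval_twistedPow (hDx : D x = 1) (a : k) {q : ℕ} (hq : (q : k) = 0) :
    D (aeval x (twistedPow a q)) = algebraMap k K (-(2 * a ^ (q - 2))) * x := by
  rw [Derivation.map_aeval, hDx, smul_eq_mul, mul_one, derivative_twistedPow a hq]
  simp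

theorem apply_aeval_sub_aeval_eq_mul_derivation {F : Type*} [FunLike F K K]
    [AlgHomClass F k K K] {σ : F} {a : k} (hσx : σ x = x + algebraMap k K a) (hDx : D x = 1)
    {f : k[X]} (hf : f.comp (X + C a) - f = C a * derivative f) :
    σ (aeval x f) - aeval x f = algebraMap k K a * D (aeval x f) := by
  have := congrArg (aeval x) hf
  simp only [map_sub, aeval_comp, map_mul, map_add, aeval_X, aeval_C] at this
  rw [← aeval_algHom_apply, hσx, this, Derivation.map_aeval, hDx, smul_eq_mul, mul_one]

end TwistedPow

theorem IntermediateField.adjoin_eq_top_of_derivation_eq_mul {k K : Type*} [Field k] [Field K]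
    [Algebra k K] {D : Derivation k K K} {x y g : K} (hxy : adjoin k {x, y} = ⊤) {c : k}
    (hc : c ≠ 0) (hDg : D g = algebraMap k K c * x) {S : Set K}
    (hS : {D y, y - x * D y, D g} ⊆ S) : adjoin k S = ⊤ := by
  have hmem : ∀ z ∈ ({D y, y - x * D y, D g} : Set K), z ∈ adjoin k S := fun z hz =>
    subset_adjoin k S (hS hz)
  have hx : x ∈ adjoin k S := by
    rw [← one_mul x, ← map_one (algebraMap k K), ← inv_mul_cancel₀ hc, map_mul, mul_assoc, ← hDg]
    exact mul_mem (algebraMap_mem _ _) (hmem _ (by simp))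
  have hy : y ∈ adjoin k S := by
    rw [← sub_add_cancel y (x * D y)]
    exact add_mem (hmem _ (by simp)) (mul_mem hx (hmem _ (by simp)))
  rw [eq_top_iff, ← hxy, adjoin_le_iff]
  rintro z (rfl | rfl) <;> assumption

end

theorem stmt12_general (k K : Type*) [Field k] [Field K] [Algebra k K]
    (p : ℕ) (hp2 : 2 < p) [CharP k p]
    (x : K) (hx : Transcendental k x)
    (D : Derivation k K K) (hDx : D x = 1)
    (y : K) (hy1 : y ∉ Submodule.span k ({1, x} : Set K))
    (hy2 : IntermediateField.adjoin k ({x, y} : Set K) = ⊤)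
    (σ : K ≃ₐ[k] K) (α : k) (hα : α ≠ 0)
    (hσx : σ x = x + algebraMap k K α)
    (N : ℕ) (hN : 3 ≤ N) :
    ∃ g : ℕ → K,
      -- (1) the family (1, x, y, g₃, …, g_N) is linearly independent over k
      (LinearIndependent k (fun i : Fin (N + 1) =>
        if (i : ℕ) = 0 then (1 : K) else if (i : ℕ) = 1 then x
        else if (i : ℕ) = 2 then y else g (i : ℕ))) ∧
      -- (2) each gᵢ satisfies σ(gᵢ) − gᵢ = α·D(gᵢ)
      (∀ i : ℕ, 3 ≤ i → i ≤ N →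
        σ (g i) - g i = algebraMap k K α * D (g i)) ∧
      -- (3) the data of the Gauss map generates K over k
      IntermediateField.adjoin k
        ({D y, y - x * D y} ∪
          ⋃ i ∈ Set.Icc 3 N, {D (g i), g i - x * D (g i)}) = ⊤ := by
  have : NeZero p := ⟨by omega⟩
  have := CharP.char_is_prime_of_pos k p
  set w : ℕ → K := fun r => aeval x (twistedPowSeq p α r)
  have hw : LinearIndependent k w :=
    (linearIndependent_twistedPowSeq (by omega) α).map' (aeval x).toLinearMap
      (LinearMap.ker_eq_bot.mpr (transcendental_iff_injective.mp hx))
  have hw01 : w '' {0, 1} = {1, x} := by simp [w, twistedPowSeq, image_pair]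
  obtain ⟨t, ht⟩ := hw.exists_notMem_span_image_shift (hw01 ▸ hy1) N
  have hg : ∀ i, 2 ≤ i → w (t + i) = aeval x (twistedPow α (p ^ (t + i))) := fun i hi => by
    simp only [w, twistedPowSeq_of_two_le p α (by omega : 2 ≤ t + i)]
  refine ⟨fun i => w (t + i), ?_, fun i hi _ => ?_, ?_⟩
  · refine hw.linearIndependent_of_eq_shift (by omega) ht (by simp) fun i hi2 => ?_
    rcases lt_or_ge (i : ℕ) 2 with hi | hi
    · interval_cases (i : ℕ) <;> simp [w, twistedPowSeq]
    · simp [hi2, show (i : ℕ) ≠ 0 by omega, show (i : ℕ) ≠ 1 by omega, show ¬(i : ℕ) < 2 by omega]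
  · dsimp only
    rw [hg i (by omega)]
    exact apply_aeval_sub_aeval_eq_mul_derivation hσx hDx
      (twistedPow_comp_X_add_C_sub p α (by omega))
  · have hq : ((p ^ (t + 3) : ℕ) : k) = 0 := by simp [CharP.cast_eq_zero]
    have h2 : (2 : k) ≠ 0 := Ring.two_ne_zero (by rw [ringChar.eq k p]; omega)
    refine IntermediateField.adjoin_eq_top_of_derivation_eq_mul hy2
      (neg_ne_zero.mpr (mul_ne_zero h2 (pow_ne_zero _ hα)))
      ((hg 3 (by omega)).symm ▸ derivation_aeval_twistedPow hDx α hq) ?_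
    rintro z (rfl | rfl | rfl)
    exacts [Or.inl (Or.inl rfl), Or.inl (Or.inr rfl),
      Or.inr (mem_biUnion ⟨le_rfl, hN⟩ (mem_insert _ _))]

theorem stmt12 (k K : Type*) [Field k] [IsAlgClosed k] [Field K] [Algebra k K]
    (p : ℕ) (hp2 : 2 < p) [CharP k p]
    (x : K) (hx : Transcendental k x)
    [FiniteDimensional ↥(IntermediateField.adjoin k ({x} : Set K)) K]
    [Algebra.IsSeparable ↥(IntermediateField.adjoin k ({x} : Set K)) K]
    (D : Derivation k K K) (hDx : D x = 1)
    (y : K) (hy1 : y ∉ Submodule.span k ({1, x} : Set K))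
    (hy2 : IntermediateField.adjoin k ({x, y} : Set K) = ⊤)
    (σ : K ≃ₐ[k] K) (α : k) (hα : α ≠ 0)
    (hσx : σ x = x + algebraMap k K α)
    (hσy : σ y - y = algebraMap k K α * D y)
    (N : ℕ) (hN : 3 ≤ N) :
    ∃ g : ℕ → K,
      -- (1) the family (1, x, y, g₃, …, g_N) is linearly independent over k
      (LinearIndependent k (fun i : Fin (N + 1) =>
        if (i : ℕ) = 0 then (1 : K) else if (i : ℕ) = 1 then x
        else if (i : ℕ) = 2 then y else g (i : ℕ))) ∧
      -- (2) each gᵢ satisfies σ(gᵢ) − gᵢ = α·D(gᵢ)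
      (∀ i : ℕ, 3 ≤ i → i ≤ N →
        σ (g i) - g i = algebraMap k K α * D (g i)) ∧
      -- (3) the data of the Gauss map generates K over k
      IntermediateField.adjoin k
        ({D y, y - x * D y} ∪
          ⋃ i ∈ Set.Icc 3 N, {D (g i), g i - x * D (g i)}) = ⊤ :=
  stmt12_general k K p hp2 x hx D hDx y hy1 hy2 σ α hα hσx N hN
end

section
/- There exists y ∈ K satisfying the hypotheses of Theorem main: y does not lie in the k-linear span of {1, x}; K = k(x, y); and σ(y) − y = α·D(y) (indeed one may take y = h^p for some h ∈ K fixed by σ, so that σ(y) = y and D(y) = 0). -/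
/-!
`K` has prime degree `p` over the fixed field `F` of `⟨σ⟩`, and `x ∉ F`, so `K = F(x)`.
The element `z = x ^ p - α ^ (p - 1) * x` is `σ`-invariant, and `x` is a root of the separable
polynomial `X ^ p - α ^ (p - 1) * X - z`, so `K`, hence `F`, is finite separable over `k(z)`.
A primitive element `w` of `F / k(z)` gives `K = k(x, w)`; replacing `w` by `w + z` if needed,
`w` is transcendental. Every `p`-th power of `K` lies in `M = k(x, w ^ p)`, so `K / M` is purely
inseparable, and it is separable because `k(x) ≤ M`; hence `K = M`. Finally `y = w ^ p` is fixed
by `σ` while `σ` moves every non-constant element of `k + k x`, and `D y = p w ^ (p - 1) D w = 0`.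
-/

open IntermediateField Polynomial

section PowChar

variable {k K : Type*} [Field k] [Field K] [Algebra k K] (p : ℕ) [ExpChar K p]

theorem pow_mem_of_mem_adjoin {M : IntermediateField k K} {s : Set K}
    (hs : ∀ t ∈ s, t ^ p ∈ M) {t : K} (ht : t ∈ adjoin k s) : t ^ p ∈ M := by
  induction ht using adjoin_induction with
  | mem u hu => exact hs u hu
  | algebraMap u => rw [← map_pow]; exact M.algebraMap_mem _
  | add u v _ _ hu hv => rw [add_pow_expChar]; exact add_mem hu hv
  | inv u _ hu => rw [inv_pow]; exact inv_mem hu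
  | mul u v _ _ hu hv => rw [mul_pow]; exact mul_mem hu hv

theorem adjoin_pair_pow_eq_top {a b : K} [Algebra.IsSeparable k⟮a⟯ K]
    (hab : adjoin k {a, b} = ⊤) : adjoin k {a, b ^ p} = ⊤ := by
  set M := adjoin k {a, b ^ p}
  have haM : a ∈ M := subset_adjoin _ _ (Set.mem_insert _ _)
  have hpow (t : K) : t ^ p ∈ M := by
    refine pow_mem_of_mem_adjoin p (s := {a, b}) ?_ (hab ▸ mem_top)
    rintro _ (rfl | rfl)
    · exact pow_mem haM p
    · exact subset_adjoin _ _ (Set.mem_insert_of_mem _ rfl)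
  have : IsPurelyInseparable M K :=
    (isPurelyInseparable_iff_pow_mem M p).2 fun t ↦ ⟨1, ⟨t ^ p, hpow t⟩, by simp⟩
  have hle : k⟮a⟯ ≤ M := adjoin_simple_le_iff.2 haM
  have : Algebra.IsSeparable (extendScalars hle) K :=
    Algebra.isSeparable_tower_top_of_isSeparable k⟮a⟯ (extendScalars hle) K
  have : Algebra.IsSeparable M K := ‹Algebra.IsSeparable (extendScalars hle) K›
  refine eq_top_iff.2 fun t _ ↦ ?_
  obtain ⟨m, rfl⟩ := IsPurelyInseparable.surjective_algebraMap_of_isSeparable M K t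
  exact m.2

end PowChar

section FixedField

variable {k K : Type*} [Field k] [Field K] [Algebra k K] {σ : K ≃ₐ[k] K}

theorem mem_fixedField_zpowers_iff {t : K} :
    t ∈ fixedField (Subgroup.zpowers σ) ↔ σ t = t :=
  ⟨fun ht ↦ ht ⟨σ, Subgroup.mem_zpowers σ⟩,
    fun ht g ↦ Subgroup.zpowers_le.2 (show σ ∈ MulAction.stabilizer _ t from ht) g.2⟩

theorem finrank_fixedField_zpowers (hσ : IsOfFinOrder σ) :
    Module.finrank (fixedField (Subgroup.zpowers σ)) K = orderOf σ := by
  have : Finite (Subgroup.zpowers σ) := hσ.finite_zpowers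
  have : Fintype (Subgroup.zpowers σ) := Fintype.ofFinite _
  have : FaithfulSMul (Subgroup.zpowers σ) K := ⟨fun h ↦ Subtype.ext (AlgEquiv.ext h)⟩
  rw [← Nat.card_zpowers, Nat.card_eq_fintype_card]
  exact FixedPoints.finrank_eq_card (Subgroup.zpowers σ) K

theorem adjoin_fixedField_zpowers_eq_top (hσ : (orderOf σ).Prime) {x : K} (hx : σ x ≠ x) :
    adjoin (fixedField (Subgroup.zpowers σ)) {x} = ⊤ := by
  have hfin : IsOfFinOrder σ := orderOf_pos_iff.1 hσ.pos
  have := isSimpleOrder_of_finrank_prime (fixedField (Subgroup.zpowers σ)) K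
    (finrank_fixedField_zpowers hfin ▸ hσ)
  refine (eq_bot_or_eq_top _).resolve_left fun hbot ↦ hx ?_
  obtain ⟨t, ht⟩ := adjoin_simple_eq_bot_iff.1 hbot
  exact ht ▸ mem_fixedField_zpowers_iff.1 t.2

end FixedField

section ArtinSchreier

variable {k K : Type*} [Field k] [Field K] [Algebra k K] (p : ℕ)

noncomputable def artinSchreierPoly (α : k) : k[X] := X ^ p - C (α ^ (p - 1)) * X

theorem natDegree_artinSchreierPoly (hp : 1 < p) (α : k) :
    (artinSchreierPoly p α).natDegree = p := by
  rw [artinSchreierPoly, natDegree_sub_eq_left_of_natDegree_lt] <;>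
    simp only [natDegree_X_pow]
  exact (natDegree_C_mul_le _ _).trans_lt (by simpa using hp)

theorem aeval_add_algebraMap_artinSchreierPoly [ExpChar K p] (α : k) (x : K) :
    aeval (x + algebraMap k K α) (artinSchreierPoly p α) = aeval x (artinSchreierPoly p α) := by
  have hα : algebraMap k K α ^ (p - 1) * algebraMap k K α = algebraMap k K α ^ p :=
    pow_sub_one_mul (expChar_pos K p).ne' _
  simp only [artinSchreierPoly, map_sub, map_mul, map_pow, aeval_X, aeval_C, add_pow_expChar]
  linear_combination -hα

theorem isSeparable_adjoin_aeval_artinSchreierPoly [CharP K p] {α : k} (hα : α ≠ 0) (x : K) :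
    IsSeparable k⟮aeval x (artinSchreierPoly p α)⟯ x := by
  set E := k⟮aeval x (artinSchreierPoly p α)⟯
  let z : E := ⟨_, mem_adjoin_simple_self k _⟩
  let g : E[X] := C 1 * X ^ p + C (-algebraMap k E (α ^ (p - 1))) * X + C (-z)
  have hg : g.Separable := separable_C_mul_X_pow_add_C_mul_X_add_C' p p _ _ _ dvd_rfl
    (by simp [hα])
  have hgx : aeval x g = 0 := by
    simp only [g, z, artinSchreierPoly, map_add, map_mul, map_neg, map_one, map_pow, map_sub,
      aeval_C, aeval_X, ← IsScalarTower.algebraMap_apply, IntermediateField.algebraMap_apply]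
    ring
  exact hg.of_dvd (minpoly.dvd E x hgx)

theorem transcendental_aeval_artinSchreierPoly (hp : 1 < p) (α : k) {x : K}
    (hx : Transcendental k x) : Transcendental k (aeval x (artinSchreierPoly p α)) := by
  have hdeg := natDegree_artinSchreierPoly p hp α
  exact hx.aeval _ (by omega) (mem_nonZeroDivisors_of_ne_zero
    (leadingCoeff_ne_zero.2 (ne_zero_of_natDegree_gt (hdeg ▸ hp))))

end ArtinSchreier

section Construction

variable {k K : Type*} [Field k] [Field K] [Algebra k K]

theorem finiteDimensional_isSeparable_of_le_adjoin_simple {E : IntermediateField k K} {x : K}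
    (hE : E ≤ k⟮x⟯) (hx : IsSeparable E x) [FiniteDimensional k⟮x⟯ K]
    [Algebra.IsSeparable k⟮x⟯ K] : FiniteDimensional E K ∧ Algebra.IsSeparable E K := by
  have hEx : extendScalars hE = E⟮x⟯ := extendScalars_adjoin hE
  have : FiniteDimensional (extendScalars hE) K := ‹FiniteDimensional k⟮x⟯ K›
  have : Algebra.IsSeparable (extendScalars hE) K := ‹Algebra.IsSeparable k⟮x⟯ K›
  have : FiniteDimensional E (extendScalars hE) := hEx ▸ adjoin.finiteDimensional hx.isIntegral
  have : Algebra.IsSeparable E (extendScalars hE) :=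
    hEx ▸ (isSeparable_adjoin_simple_iff_isSeparable E K).2 hx
  exact ⟨Module.Finite.trans (extendScalars hE) K,
    Algebra.IsSeparable.trans E (extendScalars hE) K⟩

theorem exists_adjoin_union_eq_of_le {E F : IntermediateField k K} (h : E ≤ F)
    [FiniteDimensional E K] [Algebra.IsSeparable E K] : ∃ w ∈ F, adjoin k (E ∪ {w}) = F := by
  have : Algebra.IsSeparable E (extendScalars h) :=
    Algebra.isSeparable_tower_bot_of_isSeparable E (extendScalars h) K
  obtain ⟨w, hw⟩ := Field.exists_primitive_element E (extendScalars h)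
  refine ⟨w, w.2, ?_⟩
  rw [← restrictScalars_adjoin, ← lift_adjoin_simple, hw, lift_top,
    extendScalars_restrictScalars]

theorem exists_transcendental_mem_adjoin_pair_eq_top {F : IntermediateField k K} {x w z : K}
    (hwF : w ∈ F) (hzF : z ∈ F) (hw : adjoin k {x, w} = ⊤) (hzx : z ∈ k⟮x⟯)
    (hz : Transcendental k z) : ∃ h ∈ F, Transcendental k h ∧ adjoin k {x, h} = ⊤ := by
  by_cases hwt : Transcendental k w
  · exact ⟨w, hwF, hwt, hw⟩
  refine ⟨w + z, add_mem hwF hzF, fun halg ↦ hz ?_, eq_top_iff.2 ?_⟩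
  · rw [Transcendental, not_not, ← mem_algebraicClosure_iff] at hwt
    rw [← mem_algebraicClosure_iff] at halg ⊢
    simpa using sub_mem halg hwt
  · have hzx' : z ∈ adjoin k {x, w + z} :=
      adjoin_simple_le_iff.2 (subset_adjoin _ _ (Set.mem_insert _ _)) hzx
    have hwz : w + z ∈ adjoin k {x, w + z} := subset_adjoin _ _ (Set.mem_insert_of_mem _ rfl)
    rw [← hw, adjoin_le_iff, Set.insert_subset_iff, Set.singleton_subset_iff]
    refine ⟨subset_adjoin _ _ (Set.mem_insert _ _), ?_⟩
    simpa using sub_mem hwz hzx'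

theorem exists_fixed_transcendental_adjoin_pair_eq_top (p : ℕ) [Fact p.Prime] [CharP K p]
    {σ : K ≃ₐ[k] K} (hord : orderOf σ = p) {x : K} (hx : Transcendental k x)
    [FiniteDimensional k⟮x⟯ K] [Algebra.IsSeparable k⟮x⟯ K] {α : k} (hα : α ≠ 0)
    (hσx : σ x = x + algebraMap k K α) :
    ∃ h, σ h = h ∧ Transcendental k h ∧ adjoin k {x, h} = ⊤ := by
  set z := aeval x (artinSchreierPoly p α)
  have hσz : σ z = z := by
    rw [← aeval_algHom_apply, hσx, aeval_add_algebraMap_artinSchreierPoly]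
  have hzx : z ∈ k⟮x⟯ := algebra_adjoin_le_adjoin k {x} (aeval_mem_adjoin_singleton k (p := _) x)
  have hzF : z ∈ fixedField (Subgroup.zpowers σ) := mem_fixedField_zpowers_iff.2 hσz
  obtain ⟨_, _⟩ := finiteDimensional_isSeparable_of_le_adjoin_simple
    (adjoin_simple_le_iff.2 hzx) (isSeparable_adjoin_aeval_artinSchreierPoly p hα x)
  obtain ⟨w, hwF, hw⟩ := exists_adjoin_union_eq_of_le (adjoin_simple_le_iff.2 hzF)
  have hσx_ne : σ x ≠ x := by simpa [hσx] using hα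
  have hFx := congrArg (restrictScalars k)
    (adjoin_fixedField_zpowers_eq_top (hord ▸ Fact.out) hσx_ne)
  rw [restrictScalars_adjoin, restrictScalars_top] at hFx
  have hxw : adjoin k {x, w} = ⊤ := by
    have hxxw : k⟮x⟯ ≤ adjoin k {x, w} := adjoin.mono _ _ _ (by simp)
    have hwxw : w ∈ adjoin k {x, w} := subset_adjoin _ _ (Set.mem_insert_of_mem _ rfl)
    rw [eq_top_iff, ← hFx, adjoin_le_iff, ← hw, Set.union_subset_iff, Set.singleton_subset_iff]
    refine ⟨adjoin_le_iff.2 (Set.union_subset ?_ ?_), hxxw (mem_adjoin_simple_self k x)⟩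
    · exact (adjoin_simple_le_iff.2 hzx).trans hxxw
    · exact Set.singleton_subset_iff.2 hwxw
  obtain ⟨h, hhF, hh⟩ := exists_transcendental_mem_adjoin_pair_eq_top hwF hzF hxw hzx
    (transcendental_aeval_artinSchreierPoly p (Fact.out : p.Prime).one_lt α hx)
  exact ⟨h, mem_fixedField_zpowers_iff.1 hhF, hh⟩

theorem notMem_span_one_of_transcendental_of_fixed {σ : K ≃ₐ[k] K} {x y : K} {α : k}
    (hα : α ≠ 0) (hσx : σ x = x + algebraMap k K α) (hσy : σ y = y) (hy : Transcendental k y) :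
    y ∉ Submodule.span k {1, x} := by
  intro hspan
  obtain ⟨a, b, rfl⟩ := Submodule.mem_span_pair.1 hspan
  have hb : b = 0 := by
    rw [map_add, map_smul, map_smul, map_one, hσx, smul_add, ← add_assoc, add_eq_left,
      smul_eq_zero, map_eq_zero] at hσy
    exact hσy.resolve_right hα
  rw [hb, zero_smul, add_zero, ← Algebra.algebraMap_eq_smul_one] at hy
  exact hy (isAlgebraic_algebraMap a)

end Construction

theorem stmt13_general (k K : Type*) [Field k] [Field K] [Algebra k K]
    (p : ℕ) (hp2 : 2 < p) [CharP k p]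
    (x : K) (hx : Transcendental k x)
    [FiniteDimensional ↥(IntermediateField.adjoin k ({x} : Set K)) K]
    [Algebra.IsSeparable ↥(IntermediateField.adjoin k ({x} : Set K)) K]
    (D : Derivation k K K)
    (σ : K ≃ₐ[k] K) (hord : orderOf σ = p)
    (α : k) (hα : α ≠ 0) (hσx : σ x = x + algebraMap k K α) :
    ∃ y : K,
      y ∉ Submodule.span k ({1, x} : Set K) ∧
      IntermediateField.adjoin k ({x, y} : Set K) = ⊤ ∧
      σ y - y = algebraMap k K α * D y ∧
      ∃ h : K, σ h = h ∧ y = h ^ p := by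
  have hp : p.Prime := (CharP.char_is_prime_or_zero k p).resolve_right (by omega)
  have : Fact p.Prime := ⟨hp⟩
  have : CharP K p := charP_of_injective_algebraMap (algebraMap k K).injective p
  obtain ⟨h, hσh, hh, hxh⟩ := exists_fixed_transcendental_adjoin_pair_eq_top p hord hx hα hσx
  have hσhp : σ (h ^ p) = h ^ p := by rw [map_pow, hσh]
  refine ⟨h ^ p, notMem_span_one_of_transcendental_of_fixed hα hσx hσhp (hh.pow hp.pos),
    adjoin_pair_pow_eq_top p hxh, ?_, h, hσh, rfl⟩
  simp [hσhp, D.leibniz_pow]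

theorem stmt13 (k K : Type*) [Field k] [IsAlgClosed k] [Field K] [Algebra k K]
    (p : ℕ) (hp2 : 2 < p) [CharP k p]
    (x : K) (hx : Transcendental k x)
    [FiniteDimensional ↥(IntermediateField.adjoin k ({x} : Set K)) K]
    [Algebra.IsSeparable ↥(IntermediateField.adjoin k ({x} : Set K)) K]
    (D : Derivation k K K) (hDx : D x = 1)
    (σ : K ≃ₐ[k] K) (hord : orderOf σ = p)
    (α : k) (hα : α ≠ 0) (hσx : σ x = x + algebraMap k K α) :
    ∃ y : K,
      y ∉ Submodule.span k ({1, x} : Set K) ∧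
      IntermediateField.adjoin k ({x, y} : Set K) = ⊤ ∧
      σ y - y = algebraMap k K α * D y ∧
      ∃ h : K, σ h = h ∧ y = h ^ p :=
  stmt13_general k K p hp2 x hx D σ hord α hα hσx
end

section
/- Let n ≥ 1 be an integer, β ∈ k, and set g := x^2 + β·x^{p^n}. Then the subfield of K generated over k by the four elements D(y), y − x·D(y), D(g), and g − x·D(g) equals all of K. (Since D(g) = 2x and p > 2, this subfield contains x, hence y, proving that the Gauss map of the corresponding curve is birational onto its image.) -/
theorem stmt14 (k K : Type*) [Field k] [Field K] [Algebra k K]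
    (p : ℕ) (hp2 : 2 < p) [CharP k p]
    (x y : K) (hK : IntermediateField.adjoin k ({x, y} : Set K) = ⊤)
    (D : Derivation k K K) (hDx : D x = 1)
    (n : ℕ) (hn : 1 ≤ n) (β : k) :
    IntermediateField.adjoin k
      ({D y, y - x * D y,
        D (x ^ 2 + algebraMap k K β * x ^ p ^ n),
        (x ^ 2 + algebraMap k K β * x ^ p ^ n)
          - x * D (x ^ 2 + algebraMap k K β * x ^ p ^ n)} : Set K) = ⊤ := by
  have hpprime : p.Prime := by
    rcases CharP.char_is_prime_or_zero k p with h | h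
    · exact h
    · omega
  haveI : CharP K p := charP_of_injective_algebraMap (algebraMap k K).injective p
  have hpK : (p : K) ^ n = 0 := by
    rw [CharP.cast_eq_zero K p, zero_pow (by omega)]
  -- compute D g = 2 x
  have hDg : D (x ^ 2 + algebraMap k K β * x ^ p ^ n) = 2 * x := by
    rw [map_add, Derivation.leibniz, Derivation.map_algebraMap, Derivation.leibniz_pow,
      Derivation.leibniz_pow, hDx]
    push_cast
    simp only [smul_eq_mul]
    linear_combination (x ^ (p ^ n - 1) * algebraMap k K β) * hpK
  have h2 : (2 : K) ≠ 0 := by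
    rw [Ne, show (2 : K) = ((2 : ℕ) : K) by norm_num, CharP.cast_eq_zero_iff K p]
    intro h
    have := Nat.le_of_dvd (by norm_num) h
    omega
  set F := IntermediateField.adjoin k
      ({D y, y - x * D y,
        D (x ^ 2 + algebraMap k K β * x ^ p ^ n),
        (x ^ 2 + algebraMap k K β * x ^ p ^ n)
          - x * D (x ^ 2 + algebraMap k K β * x ^ p ^ n)} : Set K) with hF
  have h2x : (2 : K) * x ∈ F := by
    rw [← hDg]
    exact IntermediateField.subset_adjoin k _ (by simp)
  have hxF : x ∈ F := by
    have := F.inv_mem (F.mul_mem (F.inv_mem h2x) h2x)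
    have hx : x = (2 : K)⁻¹ * ((2 : K) * x) := by field_simp
    rw [hx]
    exact F.mul_mem (F.inv_mem (by simpa using F.natCast_mem 2)) h2x
  have hDyF : D y ∈ F := IntermediateField.subset_adjoin k _ (by simp)
  have hyF : y ∈ F := by
    have h1 : y - x * D y ∈ F := IntermediateField.subset_adjoin k _ (by simp)
    have := F.add_mem h1 (F.mul_mem hxF hDyF)
    simpa using this
  rw [eq_top_iff, ← hK, IntermediateField.adjoin_le_iff]
  rintro z (rfl | rfl)
  · exact hxF
  · exact hyF
end
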